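/- Fix real constants m > 0, k ≠ 0, M > 0, set Ñ₁ = 1, Ñ₂ = M, Ñ₃ = 1, and let h be a natural number. On the open set of points (I₁,I₂,I₃,φ¹,φ²,φ³) ∈ ℝ⁶ with I₁, I₂, I₃ > 0, define H' = −mk²/(2 I₃²) and F_h = −mk²/((2+h) I₃^{2+h}). Then the Hamiltonian vector field of H' with respect to the Poisson bracket {f,g}_{P'} = Σ_j Ñ_j (∂f/∂I_j ∂g/∂φ^j − ∂f/∂φ^j ∂g/∂I_j) coincides with the Hamiltonian vector field of F_h with respect to the bracket {f,g}_{P̃_h} = Σ_j Ñ_j^{h+1} I_j^h (∂f/∂I_j ∂g/∂φ^j − ∂f/∂φ^j ∂g/∂I_j): for every smooth function g, {H', g}_{P'} = {F_h, g}_{P̃_h} = (mk²/I₃³) ∂g/∂φ³. In particular the Kepler flow is bi-Hamiltonian with respect to each pair (P', P̃_h). -/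

import Mathlib

open scoped BigOperators

/-- Phase space with Delaunay-type coordinates `z.1 = (I₁,I₂,I₃)` and
angles `z.2 = (φ¹,φ²,φ³)`. -/
abbrev PhaseSpace := (Fin 3 → ℝ) × (Fin 3 → ℝ)

/-- Partial derivative of `f` with respect to the action coordinate `I_j`. -/
noncomputable def pdI (f : PhaseSpace → ℝ) (j : Fin 3) (z : PhaseSpace) : ℝ :=
  fderiv ℝ f z (Pi.single j 1, 0)

/-- Partial derivative of `f` with respect to the angle coordinate `φ^j`. -/
noncomputable def pdA (f : PhaseSpace → ℝ) (j : Fin 3) (z : PhaseSpace) : ℝ :=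
  fderiv ℝ f z (0, Pi.single j 1)

/-- The constants `Ñ₁ = 1, Ñ₂ = M, Ñ₃ = 1`. -/
noncomputable def Ntil (M : ℝ) : Fin 3 → ℝ := ![1, M, 1]

/-- The Poisson bracket of the bivector `P'`:
`{f,g}_{P'} = Σ_j Ñ_j (∂f/∂I_j ∂g/∂φ^j − ∂f/∂φ^j ∂g/∂I_j)`. -/
noncomputable def brP (M : ℝ) (f g : PhaseSpace → ℝ) (z : PhaseSpace) : ℝ :=
  ∑ j : Fin 3, Ntil M j * (pdI f j z * pdA g j z - pdA f j z * pdI g j z)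

/-- The Poisson bracket of the bivector `P̃_h`:
`{f,g}_{P̃_h} = Σ_j Ñ_j^{h+1} I_j^h (∂f/∂I_j ∂g/∂φ^j − ∂f/∂φ^j ∂g/∂I_j)`. -/
noncomputable def brPt (M : ℝ) (h : ℕ) (f g : PhaseSpace → ℝ) (z : PhaseSpace) : ℝ :=
  ∑ j : Fin 3, (Ntil M j) ^ (h + 1) * (z.1 j) ^ h *
    (pdI f j z * pdA g j z - pdA f j z * pdI g j z)

/-- The Kepler Hamiltonian in Delaunay-type coordinates: `H' = −mk²/(2I₃²)`. -/
noncomputable def Hkep (m k : ℝ) (z : PhaseSpace) : ℝ :=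
  -(m * k ^ 2) / (2 * (z.1 2) ^ 2)

/-- The hierarchy of Hamiltonians `F_h = −mk²/((2+h) I₃^{2+h})` (so `F₀ = H'`). -/
noncomputable def Fham (m k : ℝ) (h : ℕ) (z : PhaseSpace) : ℝ :=
  -(m * k ^ 2) / (((2 : ℝ) + h) * (z.1 2) ^ (2 + h))


noncomputable def π3 : PhaseSpace →L[ℝ] ℝ :=
  (ContinuousLinearMap.proj 2).comp (ContinuousLinearMap.fst ℝ (Fin 3 → ℝ) (Fin 3 → ℝ))

lemma hasFDerivAt_aux (c : ℝ) {p : ℕ} (hp : p ≠ 0) {z : PhaseSpace} (hz : z.1 2 ≠ 0) :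
    HasFDerivAt (fun w : PhaseSpace => c / (w.1 2) ^ p)
      ((-(p : ℝ) * c / (z.1 2) ^ (p + 1)) • π3) z := by
  obtain ⟨q, rfl⟩ := Nat.exists_eq_succ_of_ne_zero hp
  have h1 : HasDerivAt (fun x : ℝ => c / x ^ (q + 1))
      (-((q + 1 : ℕ) : ℝ) * c / (z.1 2) ^ (q + 1 + 1)) (z.1 2) := by
    have := ((hasDerivAt_pow (q + 1) (z.1 2)).inv (pow_ne_zero _ hz)).const_mul c
    refine this.congr_deriv ?_
    rw [Nat.add_sub_cancel]
    push_cast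
    field_simp
    ring
  have := h1.comp_hasFDerivAt z π3.hasFDerivAt
  exact this

lemma pdI_aux (c : ℝ) {p : ℕ} (hp : p ≠ 0) {z : PhaseSpace} (hz : z.1 2 ≠ 0) (j : Fin 3) :
    pdI (fun w => c / (w.1 2) ^ p) j z
      = if j = 2 then -(p : ℝ) * c / (z.1 2) ^ (p + 1) else 0 := by
  rw [pdI, (hasFDerivAt_aux c hp hz).fderiv]
  rcases eq_or_ne j 2 with rfl | hj
  · simp [π3]
  · simp [π3, Pi.single_eq_of_ne (Ne.symm hj), hj]

lemma pdA_aux (c : ℝ) {p : ℕ} (hp : p ≠ 0) {z : PhaseSpace} (hz : z.1 2 ≠ 0) (j : Fin 3) :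
    pdA (fun w => c / (w.1 2) ^ p) j z = 0 := by
  rw [pdA, (hasFDerivAt_aux c hp hz).fderiv]
  simp [π3]

/-- The Hamiltonian vector field of `H'` with respect to `P'` coincides with the
Hamiltonian vector field of `F_h` with respect to `P̃_h`: for every smooth `g`,
`{H', g}_{P'} = {F_h, g}_{P̃_h} = (mk²/I₃³) ∂g/∂φ³` on `{I₁,I₂,I₃ > 0}`;
the Kepler flow is bi-Hamiltonian with respect to each pair `(P', P̃_h)`. -/
theorem stmt14 (m k M : ℝ) (hm : 0 < m) (hk : k ≠ 0) (hM : 0 < M) (h : ℕ) :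
    ∀ g : PhaseSpace → ℝ, ContDiff ℝ (⊤ : ℕ∞) g →
      ∀ z : PhaseSpace, (∀ j : Fin 3, 0 < z.1 j) →
        brP M (Hkep m k) g z = m * k ^ 2 / (z.1 2) ^ 3 * pdA g 2 z ∧
        brPt M h (Fham m k h) g z = m * k ^ 2 / (z.1 2) ^ 3 * pdA g 2 z := by
  intro g _ z hz
  have hzne : z.1 2 ≠ 0 := (hz 2).ne'
  have e1 : Hkep m k = fun w : PhaseSpace => (-(m * k ^ 2) / 2) / (w.1 2) ^ 2 := by
    funext w; show -(m * k ^ 2) / (2 * (w.1 2) ^ 2) = _; rw [← div_div]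
  have e2 : Fham m k h
      = fun w : PhaseSpace => (-(m * k ^ 2) / ((2 : ℝ) + h)) / (w.1 2) ^ (2 + h) := by
    funext w
    show -(m * k ^ 2) / (((2 : ℝ) + h) * (w.1 2) ^ (2 + h)) = _
    rw [← div_div]
  constructor
  · rw [brP, Fin.sum_univ_three, e1]
    rw [pdI_aux _ (by norm_num) hzne, pdI_aux _ (by norm_num) hzne,
      pdI_aux _ (by norm_num) hzne, pdA_aux _ (by norm_num) hzne,
      pdA_aux _ (by norm_num) hzne, pdA_aux _ (by norm_num) hzne,
      if_neg (by decide : ¬(0 : Fin 3) = 2), if_neg (by decide : ¬(1 : Fin 3) = 2),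
      if_pos rfl]
    simp only [Ntil]
    norm_num
    field_simp
    simp [Matrix.cons_val]
  · rw [brPt, Fin.sum_univ_three, e2]
    rw [pdI_aux _ (by omega) hzne, pdI_aux _ (by omega) hzne,
      pdI_aux _ (by omega) hzne, pdA_aux _ (by omega) hzne,
      pdA_aux _ (by omega) hzne, pdA_aux _ (by omega) hzne,
      if_neg (by decide : ¬(0 : Fin 3) = 2), if_neg (by decide : ¬(1 : Fin 3) = 2),
      if_pos rfl]
    simp only [Ntil]
    norm_num
    have h2h : ((2 : ℝ) + h) ≠ 0 := by positivity
    field_simp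
    simp [Matrix.cons_val]
    ring
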